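/- arXiv:2007.09962 — 2 statements merged into one kernel-verified Lean document; each statement's English description precedes it below -/
import Mathlib

section
/- Fix n ∈ ℕ. Let T be a ternary form of degree d = 8+2n and let A = {P_1,…,P_r} ⊂ ℙ^2 be a non-redundant decomposition of T of length r ≤ 11+3n. Assume the second Kruskal rank of A is k_2(A) = min{6, r}, and the (n+3)-th Kruskal rank of A satisfies k_{n+3}(A) ≥ min{r, 3n+9}. Then T has rank r and is identifiable. -/
open MvPolynomial
open scoped Classical

noncomputable section

/-- Points of the projective space `ℙ^m` over `ℂ`. -/
abbrev Pt (m : ℕ) := Projectivization ℂ (Fin (m + 1) → ℂ)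

/-- The linear form with coefficient vector `v`. -/
def linForm {m : ℕ} (v : Fin (m + 1) → ℂ) : MvPolynomial (Fin (m + 1)) ℂ :=
  ∑ i, C (v i) * X i

/-- The degree-`d` Veronese image of a projective point, i.e. the `d`-th power `L^d`
of a linear form `L` representing the point. -/
def powRep {m : ℕ} (d : ℕ) (P : Pt m) : MvPolynomial (Fin (m + 1)) ℂ :=
  linForm P.rep ^ d

/-- `A ⊆ ℙ^m` is a decomposition of the form `T` of degree `d`:
`T = a_1 L_1^d + ⋯ + a_r L_r^d`. -/
def IsDecomp {m : ℕ} (d : ℕ) (A : Finset (Pt m))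
    (T : MvPolynomial (Fin (m + 1)) ℂ) : Prop :=
  ∃ a : Pt m → ℂ, T = ∑ P ∈ A, a P • powRep d P

/-- A decomposition is non-redundant if `T` is not in the span of `ν_d(A')`
for any proper subset `A' ⊊ A`. -/
def NonRedundant {m : ℕ} (d : ℕ) (A : Finset (Pt m))
    (T : MvPolynomial (Fin (m + 1)) ℂ) : Prop :=
  ∀ A' : Finset (Pt m), A' ⊂ A →
    T ∉ Submodule.span ℂ (powRep d '' (A' : Set (Pt m)))

/-- The Cayley–Bacharach property `CB(d)`. -/
def CB {m : ℕ} (d : ℕ) (Z : Finset (Pt m)) : Prop :=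
  ∀ P ∈ Z, ∀ F : MvPolynomial (Fin (m + 1)) ℂ, F.IsHomogeneous d →
    (∀ Q ∈ Z.erase P, eval Q.rep F = 0) → eval P.rep F = 0

/-- The `d`-th Kruskal rank of a finite set `Z ⊂ ℙ^m`: the largest `k` (at most `ℓ(Z)`)
such that the Veronese images of every subset of `Z` of cardinality at most `k`
are linearly independent. -/
def kruskalRank {m : ℕ} (d : ℕ) (Z : Finset (Pt m)) : ℕ :=
  sSup {k | k ≤ Z.card ∧ ∀ S ⊆ Z, S.card ≤ k →
    LinearIndependent ℂ (fun P : S => powRep d P.1)}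

/-- The evaluation map of degree `d` on (representatives of) the points of `Z`. -/
def evalMap {m : ℕ} (Z : Finset (Pt m)) (d : ℕ) :
    homogeneousSubmodule (Fin (m + 1)) ℂ d →ₗ[ℂ] (Z → ℂ) where
  toFun F P := eval (P : Pt m).rep F.1
  map_add' F G := by funext P; simp
  map_smul' c F := by funext P; simp [smul_eq_C_mul]

/-- The Hilbert function of a finite set of points `Z ⊂ ℙ^m`. -/
def hf {m : ℕ} (Z : Finset (Pt m)) (d : ℕ) : ℕ :=
  Module.finrank ℂ (LinearMap.range (evalMap Z d))

/-- The first difference of the Hilbert function (with `h_Z(j) = 0` for `j < 0`). -/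
def Dhf {m : ℕ} (Z : Finset (Pt m)) (j : ℕ) : ℤ :=
  if j = 0 then (hf Z 0 : ℤ) else (hf Z j : ℤ) - (hf Z (j - 1) : ℤ)

/-!
Write `k = n + 4`, so that `T` has degree `2k`, and `L_P` for the linear form of `P`.
Differentiating a relation `∑ c_P L_P^(j+1) = 0` in a direction `u` contracts it to
`∑ c_P ⟪P, u⟫ L_P^j = 0`. Contracting along a line through one point of the support that
avoids the others gives `k_(j+1)(A) ≥ k_j(A) + 1`; with the two Kruskal bounds this makes
`ν_k(A)` linearly independent. Contracting `T = ∑ a_P L_P^(2k)` `k` times along every `u`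
shows `span ν_k(A) ⊆ span ν_k(B)` for every decomposition `B` (the catalecticant bound), so
`r ≤ ℓ(B)`, with equal spans when `ℓ(B) ≤ r`.

Then every `Q ∈ B \ A` has `L_Q^k` in the span of `ν_k(A)`, and contracting along the pencil of
lines through `Q` forces `r = 3n + 11` and fills the (at most two-dimensional) space of
degree-`(n+3)` relations on `A`. For two new points `Q₁, Q₂` the two pencils therefore induce a
projective correspondence between the lines through `Q₁` and through `Q₂`, and the points where
corresponding lines meet lie on a conic (Steiner). At least six points of `A` do, contradicting
`k₂(A) = 6`. A single new point is excluded by contracting along a line through it.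
-/

variable {m : ℕ}

lemma eval_linForm (v w : Fin (m + 1) → ℂ) : eval w (linForm v) = v ⬝ᵥ w := by
  simp [linForm, dotProduct]

lemma eval_powRep (d : ℕ) (P : Pt m) (w : Fin (m + 1) → ℂ) :
    eval w (powRep d P) = (P.rep ⬝ᵥ w) ^ d := by
  rw [powRep, map_pow, eval_linForm]

lemma exists_dotProduct_ne_zero {v : Fin (m + 1) → ℂ} (hv : v ≠ 0) : ∃ w, v ⬝ᵥ w ≠ 0 := by
  obtain ⟨i, hi⟩ := Function.ne_iff.mp hv
  exact ⟨Pi.single i 1, by simpa using hi⟩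

lemma powRep_ne_zero (d : ℕ) (P : Pt m) : powRep d P ≠ 0 := by
  obtain ⟨w, hw⟩ := exists_dotProduct_ne_zero P.rep_nonzero
  intro h
  have := congrArg (eval w) h
  rw [eval_powRep, map_zero] at this
  exact pow_ne_zero d hw this

def dirDeriv (u : Fin (m + 1) → ℂ) :
    Derivation ℂ (MvPolynomial (Fin (m + 1)) ℂ) (MvPolynomial (Fin (m + 1)) ℂ) :=
  ∑ i, u i • pderiv i

lemma dirDeriv_apply (u : Fin (m + 1) → ℂ) (p : MvPolynomial (Fin (m + 1)) ℂ) :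
    dirDeriv u p = ∑ i, u i • pderiv i p := by
  change Derivation.coeFnAddMonoidHom (∑ i, u i • pderiv i) p = _
  rw [map_sum, Finset.sum_apply]
  rfl

lemma dirDeriv_linForm (u v : Fin (m + 1) → ℂ) : dirDeriv u (linForm v) = C (v ⬝ᵥ u) := by
  simp [dirDeriv_apply, linForm, dotProduct, pderiv_X, Pi.single_apply, smul_eq_C_mul, mul_comm]

lemma dirDeriv_powRep_succ (u : Fin (m + 1) → ℂ) (j : ℕ) (P : Pt m) :
    dirDeriv u (powRep (j + 1) P) = ((j + 1) * (P.rep ⬝ᵥ u)) • powRep j P := by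
  rw [powRep, Derivation.leibniz_pow, dirDeriv_linForm, powRep, smul_eq_C_mul]
  simp only [add_tsub_cancel_right, smul_eq_mul, nsmul_eq_mul, Nat.cast_add, Nat.cast_one,
    C_mul, C_add, map_natCast, C_1]
  ring

lemma sum_smul_powRep_contract_one {S S' : Finset (Pt m)} {a b : Pt m → ℂ} {j : ℕ}
    (h : ∑ P ∈ S, a P • powRep (j + 1) P = ∑ P ∈ S', b P • powRep (j + 1) P)
    (u : Fin (m + 1) → ℂ) :
    ∑ P ∈ S, (a P * (P.rep ⬝ᵥ u)) • powRep j P =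
      ∑ P ∈ S', (b P * (P.rep ⬝ᵥ u)) • powRep j P := by
  have hderiv : ∀ (S : Finset (Pt m)) (a : Pt m → ℂ),
      dirDeriv u (∑ P ∈ S, a P • powRep (j + 1) P) =
        (j + 1 : ℂ) • ∑ P ∈ S, (a P * (P.rep ⬝ᵥ u)) • powRep j P := by
    intro S a
    simp only [map_sum, Derivation.map_smul, dirDeriv_powRep_succ, smul_smul, Finset.smul_sum]
    exact Finset.sum_congr rfl fun P _ => by ring_nf
  have := congrArg (dirDeriv u) h
  rw [hderiv, hderiv] at this
  exact smul_right_injective _ (Nat.cast_add_one_ne_zero j) this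

lemma sum_smul_powRep_contract {S S' : Finset (Pt m)} {a b : Pt m → ℂ} {j i : ℕ}
    (h : ∑ P ∈ S, a P • powRep (j + i) P = ∑ P ∈ S', b P • powRep (j + i) P)
    (u : Fin (m + 1) → ℂ) :
    ∑ P ∈ S, (a P * (P.rep ⬝ᵥ u) ^ i) • powRep j P =
      ∑ P ∈ S', (b P * (P.rep ⬝ᵥ u) ^ i) • powRep j P := by
  induction i generalizing j with
  | zero => simpa using h
  | succ i ih =>
    have := sum_smul_powRep_contract_one (ih (j := j + 1) (by rwa [add_right_comm])) u
    simpa only [pow_succ, mul_assoc] using this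

lemma sum_smul_powRep_contract_eq_zero {S : Finset (Pt m)} {a : Pt m → ℂ} {j : ℕ}
    (h : ∑ P ∈ S, a P • powRep (j + 1) P = 0) (u : Fin (m + 1) → ℂ) :
    ∑ P ∈ S, (a P * (P.rep ⬝ᵥ u)) • powRep j P = 0 := by
  simpa using sum_smul_powRep_contract_one (S' := ∅) (b := 0) (by simpa using h) u

lemma sum_smul_powRep_contract_eq_zero_of_dotProduct_eq_zero {Q : Pt m} {A : Finset (Pt m)}
    {c : Pt m → ℂ} {j : ℕ} (hc : powRep (j + 1) Q = ∑ P ∈ A, c P • powRep (j + 1) P)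
    {u : Fin (m + 1) → ℂ} (hu : Q.rep ⬝ᵥ u = 0) :
    ∑ P ∈ A, (c P * (P.rep ⬝ᵥ u)) • powRep j P = 0 := by
  have := sum_smul_powRep_contract_one (S := {Q}) (a := 1) (by simpa using hc) u
  simpa [hu] using this.symm

lemma exists_dotProduct_eq_zero_ne_zero {P Q : Pt m} (h : P ≠ Q) :
    ∃ u, P.rep ⬝ᵥ u = 0 ∧ Q.rep ⬝ᵥ u ≠ 0 := by
  by_contra! H
  obtain ⟨i, hi⟩ := Function.ne_iff.mp P.rep_nonzero
  refine (LinearIndependent.pair_iff' P.rep_nonzero).mp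
    (Projectivization.linearIndependent_pair_iff_ne.mpr h) (Q.rep i / P.rep i) ?_
  funext k
  have hk := H (P.rep i • Pi.single k 1 - P.rep k • Pi.single i 1) (by simp [mul_comm])
  simp only [dotProduct_sub, dotProduct_smul, dotProduct_single, smul_eq_mul, mul_one] at hk
  simp only [Pi.smul_apply, smul_eq_mul, Pi.zero_apply] at hi ⊢
  field_simp
  linear_combination -hk

lemma exists_dotProduct_eq_zero_forall_ne_zero {P : Pt m} {S : Finset (Pt m)} (hP : P ∉ S) :
    ∃ u, P.rep ⬝ᵥ u = 0 ∧ ∀ Q ∈ S, Q.rep ⬝ᵥ u ≠ 0 := by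
  obtain ⟨u, hu, huS⟩ := Module.Dual.exists_forall_mem_ne_zero_of_forall_exists
    (LinearMap.ker (dotProductEquiv ℂ _ P.rep)) (fun Q : S => dotProductEquiv ℂ _ Q.1.rep)
    fun Q => by
      obtain ⟨u, hPu, hQu⟩ := exists_dotProduct_eq_zero_ne_zero (ne_of_mem_of_not_mem Q.2 hP).symm
      exact ⟨u, hPu, hQu⟩
  exact ⟨u, hu, fun Q hQ => huS ⟨Q, hQ⟩⟩

lemma LinearIndepOn.eq_zero_of_sum_eq_sum {ι R M : Type*} [Ring R] [AddCommGroup M]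
    [Module R M] {v : ι → M} {A S : Finset ι} (hA : LinearIndepOn R v (A : Set ι)) (hS : S ⊆ A)
    {x y : ι → R} (h : ∑ i ∈ A, x i • v i = ∑ i ∈ S, y i • v i) {i : ι} (hiA : i ∈ A)
    (hiS : i ∉ S) : x i = 0 := by
  classical
  have hrel : ∑ i ∈ A, (x i - if i ∈ S then y i else 0) • v i = 0 := by
    simp only [sub_smul, Finset.sum_sub_distrib, ite_smul, zero_smul, Finset.sum_ite_mem,
      Finset.inter_eq_right.mpr hS, h, sub_self]
  simpa [hiS] using linearIndepOn_finset_iff.mp hA _ hrel i hiA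

/-- `k ≤ k_j(A)` in the paper's notation. -/
def KruskalAtLeast (j : ℕ) (A : Finset (Pt m)) (k : ℕ) : Prop :=
  ∀ S ⊆ A, S.card ≤ k → LinearIndepOn ℂ (powRep j) (S : Set (Pt m))

namespace KruskalAtLeast

variable {j k : ℕ} {A : Finset (Pt m)}

lemma of_le_kruskalRank (h : k ≤ kruskalRank j A) : KruskalAtLeast j A k := by
  have hmem : kruskalRank j A ∈ {k | k ≤ A.card ∧ ∀ S ⊆ A, S.card ≤ k →
      LinearIndependent ℂ (fun P : S => powRep j P.1)} :=
    Nat.sSup_mem ⟨0, Nat.zero_le _, fun S _ hS => by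
      rw [Finset.card_eq_zero.mp (Nat.le_zero.mp hS)]; exact linearIndependent_empty_type⟩
      ⟨A.card, fun _ hk => hk.1⟩
  exact fun S hSA hS => hmem.2 S hSA (hS.trans h)

lemma mono (h : KruskalAtLeast j A k) {k' : ℕ} (hk : k' ≤ k) : KruskalAtLeast j A k' :=
  fun S hSA hS => h S hSA (hS.trans hk)

lemma succ (h : KruskalAtLeast j A k) : KruskalAtLeast (j + 1) A (k + 1) := by
  intro S hSA hS
  rw [linearIndepOn_finset_iff]
  intro f hf P₀ hP₀
  obtain ⟨u, hP₀u, hu⟩ := exists_dotProduct_eq_zero_forall_ne_zero (Finset.notMem_erase P₀ S)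
  have hrest : ∀ P ∈ S.erase P₀, f P = 0 := by
    have hcontr := sum_smul_powRep_contract_eq_zero hf u
    rw [← Finset.sum_erase S (a := P₀) (by rw [hP₀u, mul_zero, zero_smul])] at hcontr
    have := linearIndepOn_finset_iff.mp
      (h _ ((S.erase_subset P₀).trans hSA) (by rw [Finset.card_erase_of_mem hP₀]; omega)) _ hcontr
    exact fun P hP => (mul_eq_zero.mp (this P hP)).resolve_right (hu P hP)
  rw [← Finset.add_sum_erase S _ hP₀, Finset.sum_eq_zero fun P hP => by rw [hrest P hP, zero_smul],
    add_zero, smul_eq_zero] at hf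
  exact hf.resolve_right (powRep_ne_zero _ _)

lemma lt_card_filter_ne_zero (h : KruskalAtLeast j A k) {x : Pt m → ℂ}
    (hx : ∑ P ∈ A, x P • powRep j P = 0) (hne : ∃ P ∈ A, x P ≠ 0) :
    k < (A.filter (x · ≠ 0)).card := by
  by_contra! hcard
  obtain ⟨P, hP, hxP⟩ := hne
  rw [← Finset.sum_filter_of_ne (p := (x · ≠ 0)) fun P _ hP => by
    contrapose! hP; rw [hP, zero_smul]] at hx
  exact hxP <| linearIndepOn_finset_iff.mp (h _ (Finset.filter_subset _ A) hcard) x hx P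
    (Finset.mem_filter.mpr ⟨hP, hxP⟩)

end KruskalAtLeast

instance (k : ℕ) (A : Finset (Pt m)) :
    FiniteDimensional ℂ (Submodule.span ℂ (powRep k '' (A : Set (Pt m)))) :=
  FiniteDimensional.span_of_finite ℂ (A.finite_toSet.image _)

open Submodule in
lemma finrank_span_powRep_le (k : ℕ) (A : Finset (Pt m)) :
    Module.finrank ℂ (span ℂ (powRep k '' (A : Set (Pt m)))) ≤ A.card := by
  rw [Set.image_eq_range]
  exact (finrank_range_le_card _).trans (by simp)

open Submodule in
lemma LinearIndepOn.finrank_span_powRep {k : ℕ} {A : Finset (Pt m)}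
    (hA : LinearIndepOn ℂ (powRep k) (A : Set (Pt m))) :
    Module.finrank ℂ (span ℂ (powRep k '' (A : Set (Pt m)))) = A.card := by
  rw [Set.image_eq_range, finrank_span_eq_card hA]
  simp

lemma LinearIndepOn.eq_zero_of_forall_sum_pow_smul_eq_zero {V : Type*} [AddCommGroup V]
    [Module ℂ V] {k : ℕ} {A : Finset (Pt m)} (hA : LinearIndepOn ℂ (powRep k) (A : Set (Pt m)))
    {y : Pt m → V} (h : ∀ u, ∑ P ∈ A, (P.rep ⬝ᵥ u) ^ k • y P = 0) : ∀ P ∈ A, y P = 0 := by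
  intro P hP
  rw [← Module.forall_dual_apply_eq_zero_iff ℂ]
  intro φ
  refine linearIndepOn_finset_iff.mp hA (fun P => φ (y P)) (MvPolynomial.funext fun u => ?_) P hP
  simpa [eval_powRep, mul_comm] using congrArg φ (h u)

open Submodule in
lemma span_powRep_le_of_sum_eq {k : ℕ} {A B : Finset (Pt m)} {a b : Pt m → ℂ}
    (hA : LinearIndepOn ℂ (powRep k) (A : Set (Pt m))) (ha : ∀ P ∈ A, a P ≠ 0)
    (h : ∑ P ∈ A, a P • powRep (k + k) P = ∑ P ∈ B, b P • powRep (k + k) P) :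
    span ℂ (powRep k '' (A : Set (Pt m))) ≤ span ℂ (powRep k '' (B : Set (Pt m))) := by
  set W := span ℂ (powRep k '' (B : Set (Pt m)))
  have hW : ∀ u, ∑ P ∈ A, (P.rep ⬝ᵥ u) ^ k • (a P • W.mkQ (powRep k P)) = 0 := by
    intro u
    have hB : W.mkQ (∑ P ∈ B, (b P * (P.rep ⬝ᵥ u) ^ k) • powRep k P) = 0 :=
      (Quotient.mk_eq_zero W).mpr <|
        sum_mem fun P hP => smul_mem _ _ <| subset_span <| Set.mem_image_of_mem _ hP
    rw [← sum_smul_powRep_contract h u, map_sum] at hB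
    simpa [smul_smul, mul_comm] using hB
  rw [span_le]
  rintro _ ⟨P, hP, rfl⟩
  have := (smul_eq_zero.mp (hA.eq_zero_of_forall_sum_pow_smul_eq_zero hW P hP)).resolve_left
    (ha P hP)
  exact (Quotient.mk_eq_zero W).mp this

lemma card_le_of_sum_eq {k : ℕ} {A B : Finset (Pt m)} {a b : Pt m → ℂ}
    (hA : LinearIndepOn ℂ (powRep k) (A : Set (Pt m))) (ha : ∀ P ∈ A, a P ≠ 0)
    (h : ∑ P ∈ A, a P • powRep (k + k) P = ∑ P ∈ B, b P • powRep (k + k) P) :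
    A.card ≤ B.card := by
  rw [← hA.finrank_span_powRep]
  exact (Submodule.finrank_mono (span_powRep_le_of_sum_eq hA ha h)).trans
    (finrank_span_powRep_le k B)

lemma NonRedundant.coeff_ne_zero {d : ℕ} {A : Finset (Pt m)} {a : Pt m → ℂ}
    (hA : NonRedundant d A (∑ P ∈ A, a P • powRep d P)) : ∀ P ∈ A, a P ≠ 0 := by
  intro P hP haP
  refine hA (A.erase P) (Finset.erase_ssubset hP) ?_
  rw [← Finset.sum_erase A (a := P) (by rw [haP, zero_smul])]
  exact Submodule.sum_mem _ fun R hR =>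
    Submodule.smul_mem _ _ (Submodule.subset_span (Set.mem_image_of_mem _ hR))

lemma false_of_sdiff_eq_singleton {k : ℕ} (hk : k ≠ 0) {A B : Finset (Pt m)} {a b : Pt m → ℂ}
    (hA : LinearIndepOn ℂ (powRep k) (A : Set (Pt m))) (ha : ∀ P ∈ A, a P ≠ 0)
    (h : ∑ P ∈ A, a P • powRep (k + k) P = ∑ P ∈ B, b P • powRep (k + k) P)
    {Q P : Pt m} (hBA : B \ A = {Q}) (hP : P ∈ A \ B) : False := by
  have hQ := Finset.mem_sdiff.mp (hBA ▸ Finset.mem_singleton_self Q)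
  obtain ⟨hPA, hPB⟩ := Finset.mem_sdiff.mp hP
  obtain ⟨u, hQu, hPu⟩ := exists_dotProduct_eq_zero_ne_zero (ne_of_mem_of_not_mem hPA hQ.2).symm
  have hsub : B.erase Q ⊆ A := fun R hR => by
    by_contra hRA
    refine (Finset.mem_erase.mp hR).1 (Finset.mem_singleton.mp ?_)
    exact hBA ▸ Finset.mem_sdiff.mpr ⟨Finset.mem_of_mem_erase hR, hRA⟩
  have hcontr := sum_smul_powRep_contract h u
  rw [← Finset.sum_erase B (a := Q) (by rw [hQu, zero_pow hk, mul_zero, zero_smul])] at hcontr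
  exact mul_ne_zero (ha P hPA) (pow_ne_zero k hPu)
    (hA.eq_zero_of_sum_eq_sum hsub hcontr hPA fun h => hPB (Finset.mem_of_mem_erase h))

def relSpace (j : ℕ) (A : Finset (Pt m)) : Submodule ℂ (A → ℂ) :=
  LinearMap.ker (Fintype.linearCombination ℂ fun P : A => powRep j P.1)

lemma mem_relSpace {j : ℕ} {A : Finset (Pt m)} {x : A → ℂ} :
    x ∈ relSpace j A ↔ ∑ P : A, x P • powRep j P.1 = 0 := by
  rw [relSpace, LinearMap.mem_ker, Fintype.linearCombination_apply]

lemma finrank_relSpace_add_card_le {j : ℕ} {A S : Finset (Pt m)} (hSA : S ⊆ A)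
    (hS : LinearIndepOn ℂ (powRep j) (S : Set (Pt m))) :
    Module.finrank ℂ (relSpace j A) + S.card ≤ A.card := by
  have hrank := LinearMap.finrank_range_add_finrank_ker
    (Fintype.linearCombination ℂ fun P : A => powRep j P.1)
  have hle : Submodule.span ℂ (powRep j '' (S : Set (Pt m))) ≤
      LinearMap.range (Fintype.linearCombination ℂ fun P : A => powRep j P.1) := by
    rw [Fintype.range_linearCombination, Submodule.span_le]
    rintro _ ⟨P, hP, rfl⟩
    exact Submodule.subset_span ⟨⟨P, hSA hP⟩, rfl⟩
  have := Submodule.finrank_mono hle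
  rw [hS.finrank_span_powRep] at this
  simp only [Module.finrank_fintype_fun_eq_card, Fintype.card_coe] at hrank
  rw [relSpace]
  omega

lemma KruskalAtLeast.finrank_relSpace_add_le {j k : ℕ} {A : Finset (Pt m)}
    (h : KruskalAtLeast j A k) (hk : k ≤ A.card) :
    Module.finrank ℂ (relSpace j A) + k ≤ A.card := by
  obtain ⟨S, hSA, hS⟩ := Finset.exists_subset_card_eq hk
  simpa [hS] using finrank_relSpace_add_card_le hSA (h S hSA hS.le)

def contractCoeff (A : Finset (Pt m)) (c : Pt m → ℂ) : (Fin (m + 1) → ℂ) →ₗ[ℂ] (A → ℂ) where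
  toFun u P := c P * (P.1.rep ⬝ᵥ u)
  map_add' u v := by funext P; simp [dotProduct_add, mul_add]
  map_smul' t u := by funext P; simp [dotProduct_smul]; ring

lemma contractCoeff_mem_relSpace_iff {j : ℕ} {A : Finset (Pt m)} {c : Pt m → ℂ}
    {u : Fin (m + 1) → ℂ} : contractCoeff A c u ∈ relSpace j A ↔
      ∑ P ∈ A, (c P * (P.rep ⬝ᵥ u)) • powRep j P = 0 := by
  rw [mem_relSpace, ← Finset.sum_coe_sort A]
  rfl

def perp (v : Fin (m + 1) → ℂ) : Submodule ℂ (Fin (m + 1) → ℂ) :=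
  LinearMap.ker (dotProductEquiv ℂ (Fin (m + 1)) v)

lemma mem_perp {v u : Fin (m + 1) → ℂ} : u ∈ perp v ↔ v ⬝ᵥ u = 0 := by
  simp [perp]

lemma finrank_perp {v : Fin (m + 1) → ℂ} (hv : v ≠ 0) : Module.finrank ℂ (perp v) = m := by
  have := Module.Dual.finrank_ker_add_one_of_ne_zero
    ((dotProductEquiv ℂ (Fin (m + 1))).map_ne_zero_iff.mpr hv)
  simp only [Module.finrank_fin_fun] at this
  rw [perp]
  omega

lemma finrank_map_contractCoeff {A : Finset (Pt m)} {c : Pt m → ℂ}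
    {W : Submodule ℂ (Fin (m + 1) → ℂ)} (hinj : ∀ u ∈ W, contractCoeff A c u = 0 → u = 0) :
    Module.finrank ℂ (W.map (contractCoeff A c)) = Module.finrank ℂ W := by
  rw [← LinearMap.range_domRestrict]
  refine LinearMap.finrank_range_of_inj fun u v huv => ?_
  have := hinj _ (W.sub_mem u.2 v.2) (by simpa [sub_eq_zero] using huv)
  exact Subtype.ext (sub_eq_zero.mp this)

/-- `ν₂` in the monomial basis of `Sym² ℂ³ ≅ ℂ⁶`: `quadMoments v ⬝ᵥ κ = 0` says that `v` lies
on the conic with coefficient vector `κ`. -/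
def quadMoments (v : Fin 3 → ℂ) : Fin 6 → ℂ :=
  ![v 0 * v 0, v 1 * v 1, v 2 * v 2, v 0 * v 1, v 0 * v 2, v 1 * v 2]

def quadCoeffs (a b : Fin 3 → ℂ) : Fin 6 → ℂ :=
  ![a 0 * b 0, a 1 * b 1, a 2 * b 2, a 0 * b 1 + a 1 * b 0, a 0 * b 2 + a 2 * b 0,
    a 1 * b 2 + a 2 * b 1]

lemma quadMoments_dotProduct_quadCoeffs (v a b : Fin 3 → ℂ) :
    quadMoments v ⬝ᵥ quadCoeffs a b = (v ⬝ᵥ a) * (v ⬝ᵥ b) := by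
  simp [quadMoments, quadCoeffs, dotProduct, Fin.sum_univ_succ]
  ring

def quadForm : (Fin 6 → ℂ) →ₗ[ℂ] MvPolynomial (Fin 3) ℂ :=
  Fintype.linearCombination ℂ
    ![X 0 ^ 2, X 1 ^ 2, X 2 ^ 2, 2 * X 0 * X 1, 2 * X 0 * X 2, 2 * X 1 * X 2]

lemma quadForm_quadMoments (P : Pt 2) : quadForm (quadMoments P.rep) = powRep 2 P := by
  refine MvPolynomial.funext fun w => ?_
  simp [quadForm, Fintype.linearCombination_apply, quadMoments, eval_powRep, dotProduct,
    Fin.sum_univ_succ]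
  ring

lemma not_linearIndepOn_powRep_two {S : Finset (Pt 2)} (hS : 6 ≤ S.card) {κ : Fin 6 → ℂ}
    (hκ : κ ≠ 0) (hconic : ∀ P ∈ S, quadMoments P.rep ⬝ᵥ κ = 0) :
    ¬ LinearIndepOn ℂ (powRep 2) (S : Set (Pt 2)) := by
  intro hind
  have hmom : LinearIndepOn ℂ (fun P : Pt 2 => quadMoments P.rep) (S : Set (Pt 2)) :=
    LinearIndepOn.of_comp quadForm (by simpa [Function.comp_def, quadForm_quadMoments] using hind)
  have hle : Submodule.span ℂ (Set.range fun P : (S : Set (Pt 2)) => quadMoments P.1.rep) ≤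
      perp κ := by
    rw [Submodule.span_le]
    rintro _ ⟨P, rfl⟩
    rw [SetLike.mem_coe, mem_perp, dotProduct_comm]
    exact hconic P P.2
  have := Submodule.finrank_mono hle
  rw [finrank_span_eq_card hmom, finrank_perp hκ] at this
  simp at this
  omega

namespace KruskalAtLeast

variable {A : Finset (Pt 2)}

lemma false_of_conic (h : KruskalAtLeast 2 A 6) {S : Finset (Pt 2)} (hSA : S ⊆ A)
    (hS : 6 ≤ S.card) {κ : Fin 6 → ℂ} (hκ : κ ≠ 0)
    (hconic : ∀ P ∈ S, quadMoments P.rep ⬝ᵥ κ = 0) : False := by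
  obtain ⟨S₆, hS₆, hcard⟩ := Finset.exists_subset_card_eq hS
  exact not_linearIndepOn_powRep_two hcard.ge hκ (fun P hP => hconic P (hS₆ hP))
    (h S₆ (hS₆.trans hSA) hcard.le)

lemma eq_zero_of_forall_dotProduct_eq_zero (h : KruskalAtLeast 2 A 6) {S : Finset (Pt 2)}
    (hSA : S ⊆ A) (hS : 6 ≤ S.card) {u : Fin 3 → ℂ} (hu : ∀ P ∈ S, P.rep ⬝ᵥ u = 0) : u = 0 := by
  by_contra hu0
  obtain ⟨w, hw⟩ := exists_dotProduct_ne_zero hu0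
  refine h.false_of_conic hSA hS (κ := quadCoeffs u u) (fun hκ => hw ?_) fun P hP => ?_
  · have := quadMoments_dotProduct_quadCoeffs w u u
    rw [hκ, dotProduct_zero, dotProduct_comm] at this
    exact mul_self_eq_zero.mp this.symm
  · rw [quadMoments_dotProduct_quadCoeffs, hu P hP, zero_mul]

end KruskalAtLeast

lemma quadCoeffs_sub_quadCoeffs_ne_zero {q a₁ a₂ b₁ b₂ : Fin 3 → ℂ} (ha₁ : q ⬝ᵥ a₁ = 0)
    (hb₁ : q ⬝ᵥ b₁ = 0) (hb₂ : q ⬝ᵥ b₂ = 0) (ha₂ : q ⬝ᵥ a₂ ≠ 0) (hb₁0 : b₁ ≠ 0) :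
    quadCoeffs a₁ b₂ - quadCoeffs a₂ b₁ ≠ 0 := by
  intro h
  have hK : ∀ v, (v ⬝ᵥ a₁) * (v ⬝ᵥ b₂) - (v ⬝ᵥ a₂) * (v ⬝ᵥ b₁) = 0 := fun v => by
    rw [← quadMoments_dotProduct_quadCoeffs, ← quadMoments_dotProduct_quadCoeffs,
      ← dotProduct_sub, h, dotProduct_zero]
  obtain ⟨y, hy⟩ := exists_dotProduct_ne_zero (m := 2) hb₁0
  -- polarization: `K (q + y) - K y = -⟪q, a₂⟫ ⟪y, b₁⟫`
  have hqy := hK (q + y)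
  simp only [add_dotProduct, ha₁, hb₁, hb₂, zero_add] at hqy
  have hy' : y ⬝ᵥ b₁ ≠ 0 := by rwa [dotProduct_comm]
  exact mul_ne_zero ha₂ hy' (by linear_combination hK y - hqy)

section Ternary

variable {n : ℕ} {A : Finset (Pt 2)}

lemma linearIndepOn_powRep_of_kruskal (hk2 : KruskalAtLeast 2 A (min 6 A.card))
    (hk3 : KruskalAtLeast (n + 3) A (min A.card (3 * n + 9))) (hr : A.card ≤ 3 * n + 11) :
    LinearIndepOn ℂ (powRep (n + 4)) (A : Set (Pt 2)) := by
  have hk4 := hk3.succ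
  by_cases hsmall : A.card ≤ min A.card (3 * n + 9) + 1
  · exact hk4 A subset_rfl hsmall
  rw [linearIndepOn_finset_iff]
  intro c hc P₀ hP₀
  by_contra hcP₀
  have hsupp : ∀ P ∈ A, c P ≠ 0 := by
    intro P hP hcP
    have hlt := hk4.lt_card_filter_ne_zero hc ⟨P₀, hP₀, hcP₀⟩
    have := Finset.card_lt_card
      ((Finset.filter_ssubset (p := (c · ≠ 0))).mpr ⟨P, hP, by simpa using hcP⟩)
    omega
  -- A relation of full support contracts along every `u` to a relation of degree `n + 3`: a
  -- three-dimensional family in a space of dimension at most `(3n + 11) - (3n + 9) = 2`.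
  have hmap : (⊤ : Submodule ℂ (Fin 3 → ℂ)).map (contractCoeff A c) ≤ relSpace (n + 3) A :=
    Submodule.map_le_iff_le_comap.mpr fun u _ =>
      contractCoeff_mem_relSpace_iff.mpr (sum_smul_powRep_contract_eq_zero hc u)
  have hinj : ∀ u ∈ (⊤ : Submodule ℂ (Fin 3 → ℂ)), contractCoeff A c u = 0 → u = 0 := by
    intro u _ hu
    refine (hk2.mono (by omega)).eq_zero_of_forall_dotProduct_eq_zero subset_rfl (by omega)
      fun P hP => (mul_eq_zero.mp (congrFun hu ⟨P, hP⟩)).resolve_left (hsupp P hP)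
  have h3 := Submodule.finrank_mono hmap
  rw [finrank_map_contractCoeff hinj, finrank_top, Module.finrank_fin_fun] at h3
  have h2 := hk3.finrank_relSpace_add_le (min_le_left _ _)
  omega

variable {Q : Pt 2} {c : Pt 2 → ℂ}

lemma le_card_filter_contract (hk3 : KruskalAtLeast (n + 3) A (min A.card (3 * n + 9)))
    (hc : powRep (n + 4) Q = ∑ P ∈ A, c P • powRep (n + 4) P) {u : Fin 3 → ℂ}
    (hu : Q.rep ⬝ᵥ u = 0) (hne : ∃ P ∈ A, c P * (P.rep ⬝ᵥ u) ≠ 0) :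
    3 * n + 10 ≤ (A.filter fun P => c P * (P.rep ⬝ᵥ u) ≠ 0).card := by
  have := hk3.lt_card_filter_ne_zero
    (sum_smul_powRep_contract_eq_zero_of_dotProduct_eq_zero hc hu) hne
  have := Finset.card_filter_le A fun P => c P * (P.rep ⬝ᵥ u) ≠ 0
  omega

lemma le_card_filter_coeff (hk3 : KruskalAtLeast (n + 3) A (min A.card (3 * n + 9)))
    (hQ : Q ∉ A) (hc : powRep (n + 4) Q = ∑ P ∈ A, c P • powRep (n + 4) P) :
    3 * n + 10 ≤ (A.filter (c · ≠ 0)).card := by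
  obtain ⟨P, hP, hcP⟩ : ∃ P ∈ A, c P ≠ 0 := by
    by_contra! h
    exact powRep_ne_zero _ Q (by rw [hc, Finset.sum_eq_zero fun P hP => by rw [h P hP, zero_smul]])
  obtain ⟨u, hQu, hPu⟩ := exists_dotProduct_eq_zero_ne_zero (ne_of_mem_of_not_mem hP hQ).symm
  refine (le_card_filter_contract hk3 hc hQu ⟨P, hP, mul_ne_zero hcP hPu⟩).trans <|
    Finset.card_le_card fun R hR => ?_
  rw [Finset.mem_filter] at hR ⊢
  exact ⟨hR.1, left_ne_zero_of_mul hR.2⟩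

lemma eq_zero_of_forall_contract_eq_zero (hk2 : KruskalAtLeast 2 A (min 6 A.card))
    (hk3 : KruskalAtLeast (n + 3) A (min A.card (3 * n + 9))) (hQ : Q ∉ A)
    (hc : powRep (n + 4) Q = ∑ P ∈ A, c P • powRep (n + 4) P) {u : Fin 3 → ℂ}
    (h : ∀ P ∈ A, c P * (P.rep ⬝ᵥ u) = 0) : u = 0 := by
  have hS := le_card_filter_coeff hk3 hQ hc
  have hA := Finset.card_filter_le A (c · ≠ 0)
  refine (hk2.mono (by omega)).eq_zero_of_forall_dotProduct_eq_zero
    (S := A.filter (c · ≠ 0)) (Finset.filter_subset _ A) (by omega) fun P hP => ?_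
  rw [Finset.mem_filter] at hP
  exact (mul_eq_zero.mp (h P hP.1)).resolve_left hP.2

lemma card_eq_of_external (hk2 : KruskalAtLeast 2 A (min 6 A.card))
    (hk3 : KruskalAtLeast (n + 3) A (min A.card (3 * n + 9))) (hr : A.card ≤ 3 * n + 11)
    (hQ : Q ∉ A) (hc : powRep (n + 4) Q = ∑ P ∈ A, c P • powRep (n + 4) P) :
    A.card = 3 * n + 11 := by
  obtain ⟨P, hP⟩ : (A.filter (c · ≠ 0)).Nonempty := by
    rw [← Finset.card_pos]; have := le_card_filter_coeff hk3 hQ hc; omega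
  rw [Finset.mem_filter] at hP
  have hQP : Q ≠ P := (ne_of_mem_of_not_mem hP.1 hQ).symm
  -- contracting along the line `QP` removes `P` from the support
  set u := crossProduct Q.rep P.rep
  have hu0 : u ≠ 0 := crossProduct_ne_zero_iff_linearIndependent.mpr
    (Projectivization.linearIndependent_pair_iff_ne.mpr hQP)
  have hne : ∃ R ∈ A, c R * (R.rep ⬝ᵥ u) ≠ 0 := by
    by_contra! h
    exact hu0 (eq_zero_of_forall_contract_eq_zero hk2 hk3 hQ hc h)
  have hbound := le_card_filter_contract hk3 hc (u := u) (dot_self_cross _ _) hne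
  have hsub : (A.filter fun R => c R * (R.rep ⬝ᵥ u) ≠ 0) ⊆ A.erase P := by
    intro R hR
    rw [Finset.mem_filter] at hR
    refine Finset.mem_erase.mpr ⟨?_, hR.1⟩
    rintro rfl
    exact hR.2 (by rw [dot_cross_self, mul_zero])
  have := Finset.card_le_card hsub
  rw [Finset.card_erase_of_mem hP.1] at this
  have := Finset.card_pos.mpr ⟨P, hP.1⟩
  omega

lemma map_contractCoeff_perp_eq_relSpace (hk2 : KruskalAtLeast 2 A (min 6 A.card))
    (hk3 : KruskalAtLeast (n + 3) A (min A.card (3 * n + 9))) (hr : A.card ≤ 3 * n + 11)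
    (hQ : Q ∉ A) (hc : powRep (n + 4) Q = ∑ P ∈ A, c P • powRep (n + 4) P) :
    (perp Q.rep).map (contractCoeff A c) = relSpace (n + 3) A := by
  have hA := card_eq_of_external hk2 hk3 hr hQ hc
  have hrel := hk3.finrank_relSpace_add_le (min_le_left _ _)
  refine Submodule.eq_of_le_of_finrank_le (Submodule.map_le_iff_le_comap.mpr fun u hu =>
    contractCoeff_mem_relSpace_iff.mpr
      (sum_smul_powRep_contract_eq_zero_of_dotProduct_eq_zero hc (mem_perp.mp hu))) ?_
  rw [finrank_map_contractCoeff fun u _ hu =>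
    eq_zero_of_forall_contract_eq_zero hk2 hk3 hQ hc fun P hP => congrFun hu ⟨P, hP⟩,
    finrank_perp Q.rep_nonzero]
  omega

lemma false_of_two_external (hk2 : KruskalAtLeast 2 A (min 6 A.card))
    (hk3 : KruskalAtLeast (n + 3) A (min A.card (3 * n + 9))) (hr : A.card ≤ 3 * n + 11)
    {Q₁ Q₂ : Pt 2} {c₁ c₂ : Pt 2 → ℂ} (hQ : Q₁ ≠ Q₂) (hQ₁ : Q₁ ∉ A) (hQ₂ : Q₂ ∉ A)
    (hc₁ : powRep (n + 4) Q₁ = ∑ P ∈ A, c₁ P • powRep (n + 4) P)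
    (hc₂ : powRep (n + 4) Q₂ = ∑ P ∈ A, c₂ P • powRep (n + 4) P) : False := by
  have hA := card_eq_of_external hk2 hk3 hr hQ₁ hc₁
  -- Both pencils of contractions fill the relation space, so every line through `Q₁` has a
  -- partner through `Q₂`; points where partners meet lie on a conic.
  have hlift : ∀ u ∈ perp Q₁.rep, ∃ v ∈ perp Q₂.rep,
      ∀ P ∈ A, c₂ P * (P.rep ⬝ᵥ v) = c₁ P * (P.rep ⬝ᵥ u) := by
    intro u hu
    have := Submodule.mem_map_of_mem (f := contractCoeff A c₁) hu
    rw [map_contractCoeff_perp_eq_relSpace hk2 hk3 hr hQ₁ hc₁,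
      ← map_contractCoeff_perp_eq_relSpace hk2 hk3 hr hQ₂ hc₂] at this
    obtain ⟨v, hv, hvu⟩ := this
    exact ⟨v, hv, fun P hP => congrFun hvu ⟨P, hP⟩⟩
  -- taking `a₁` to be the line `Q₁Q₂` makes that conic visibly nonzero
  set a₁ := crossProduct Q₁.rep Q₂.rep
  obtain ⟨a₂, ha₂Q₁, ha₂Q₂⟩ := exists_dotProduct_eq_zero_ne_zero hQ
  obtain ⟨b₁, hb₁, hab₁⟩ := hlift a₁ (mem_perp.mpr (dot_self_cross _ _))
  obtain ⟨b₂, hb₂, hab₂⟩ := hlift a₂ (mem_perp.mpr ha₂Q₁)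
  have hb₁0 : b₁ ≠ 0 := by
    rintro rfl
    refine crossProduct_ne_zero_iff_linearIndependent.mpr
      (Projectivization.linearIndependent_pair_iff_ne.mpr hQ) ?_
    exact eq_zero_of_forall_contract_eq_zero hk2 hk3 hQ₁ hc₁ fun P hP => by
      rw [← hab₁ P hP, dotProduct_zero, mul_zero]
  have hS : 6 ≤ (A.filter (c₁ · ≠ 0) ∩ A.filter (c₂ · ≠ 0)).card := by
    have := Finset.card_union_add_card_inter (A.filter (c₁ · ≠ 0)) (A.filter (c₂ · ≠ 0))
    have := Finset.card_le_card (Finset.union_subset (Finset.filter_subset (c₁ · ≠ 0) A)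
      (Finset.filter_subset (c₂ · ≠ 0) A))
    have := le_card_filter_coeff hk3 hQ₁ hc₁
    have := le_card_filter_coeff hk3 hQ₂ hc₂
    omega
  refine (hk2.mono (by omega)).false_of_conic
    (Finset.inter_subset_left.trans (Finset.filter_subset _ A)) hS
    (quadCoeffs_sub_quadCoeffs_ne_zero (a₁ := a₁) (dot_cross_self _ _) (mem_perp.mp hb₁)
      (mem_perp.mp hb₂) ha₂Q₂ hb₁0) fun P hP => ?_
  simp only [Finset.mem_inter, Finset.mem_filter] at hP
  have hPA := hP.1.1
  have key : c₁ P * c₂ P * ((P.rep ⬝ᵥ a₁) * (P.rep ⬝ᵥ b₂) - (P.rep ⬝ᵥ a₂) * (P.rep ⬝ᵥ b₁)) = 0 := by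
    linear_combination (c₁ P * (P.rep ⬝ᵥ a₁)) * hab₂ P hPA - (c₁ P * (P.rep ⬝ᵥ a₂)) * hab₁ P hPA
  rw [dotProduct_sub, quadMoments_dotProduct_quadCoeffs, quadMoments_dotProduct_quadCoeffs]
  exact (mul_eq_zero.mp key).resolve_left (mul_ne_zero hP.1.2 hP.2.2)

lemma eq_of_sum_eq_of_card_le {B : Finset (Pt 2)} {a b : Pt 2 → ℂ}
    (hk2 : KruskalAtLeast 2 A (min 6 A.card))
    (hk3 : KruskalAtLeast (n + 3) A (min A.card (3 * n + 9))) (hr : A.card ≤ 3 * n + 11)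
    (ha : ∀ P ∈ A, a P ≠ 0)
    (h : ∑ P ∈ A, a P • powRep ((n + 4) + (n + 4)) P =
      ∑ P ∈ B, b P • powRep ((n + 4) + (n + 4)) P)
    (hBA : B.card ≤ A.card) : B = A := by
  have hind := linearIndepOn_powRep_of_kruskal hk2 hk3 hr
  have hspan := Submodule.eq_of_le_of_finrank_le (span_powRep_le_of_sum_eq hind ha h)
    (by rw [hind.finrank_span_powRep]; exact (finrank_span_powRep_le _ B).trans hBA)
  have hrepr : ∀ Q ∈ B, ∃ c : Pt 2 → ℂ, powRep (n + 4) Q = ∑ P ∈ A, c P • powRep (n + 4) P := by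
    intro Q hQ
    obtain ⟨c, hc⟩ := (Submodule.mem_span_image_finset_iff_exists_fun' ℂ).mp
      (hspan ▸ Submodule.subset_span (Set.mem_image_of_mem _ hQ))
    exact ⟨c, hc.symm⟩
  by_contra hne
  obtain ⟨P, hP⟩ := Finset.sdiff_nonempty.mpr fun hAB =>
    hne (Finset.eq_of_subset_of_card_le hAB hBA).symm
  obtain ⟨Q₁, hQ₁⟩ := Finset.sdiff_nonempty.mpr fun hBA' =>
    hne (Finset.eq_of_subset_of_card_le hBA' (card_le_of_sum_eq hind ha h))
  by_cases hsingle : B \ A = {Q₁}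
  · exact false_of_sdiff_eq_singleton (by omega) hind ha h hsingle hP
  obtain ⟨Q₂, hQ₂, hQ₁₂⟩ : ∃ Q₂ ∈ B \ A, Q₂ ≠ Q₁ := by
    by_contra! H
    exact hsingle (Finset.eq_singleton_iff_unique_mem.mpr ⟨hQ₁, H⟩)
  rw [Finset.mem_sdiff] at hQ₁ hQ₂
  obtain ⟨c₁, hc₁⟩ := hrepr Q₁ hQ₁.1
  obtain ⟨c₂, hc₂⟩ := hrepr Q₂ hQ₂.1
  exact false_of_two_external hk2 hk3 hr hQ₁₂.symm hQ₁.2 hQ₂.2 hc₁ hc₂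

end Ternary

theorem stmt5_general (n : ℕ) (T : MvPolynomial (Fin 3) ℂ)
    (A : Finset (Pt 2)) (hA : IsDecomp (8 + 2 * n) A T)
    (hAnr : NonRedundant (8 + 2 * n) A T)
    (hr : A.card ≤ 11 + 3 * n)
    (hk2 : kruskalRank 2 A = min 6 A.card)
    (hk3 : min A.card (3 * n + 9) ≤ kruskalRank (n + 3) A) :
    (∀ B : Finset (Pt 2), IsDecomp (8 + 2 * n) B T → A.card ≤ B.card) ∧
      (∀ B : Finset (Pt 2), IsDecomp (8 + 2 * n) B T → B.card ≤ A.card → B = A) := by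
  obtain ⟨a, rfl⟩ := hA
  have hk2' := KruskalAtLeast.of_le_kruskalRank hk2.ge
  have hk3' := KruskalAtLeast.of_le_kruskalRank hk3
  have hr' : A.card ≤ 3 * n + 11 := by omega
  have ha := hAnr.coeff_ne_zero
  have hd : 8 + 2 * n = (n + 4) + (n + 4) := by ring
  refine ⟨fun B ⟨b, hb⟩ => ?_, fun B ⟨b, hb⟩ hBA => ?_⟩
  · exact card_le_of_sum_eq (linearIndepOn_powRep_of_kruskal hk2' hk3' hr') ha (hd ▸ hb)
  · exact eq_of_sum_eq_of_card_le hk2' hk3' hr' ha (hd ▸ hb) hBA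

/-- If `A` is a non-redundant decomposition of a ternary form `T` of degree
`8+2n` with `r = ℓ(A) ≤ 11+3n`, `k_2(A) = min {6, r}` and `k_{n+3}(A) ≥ min {r, 3n+9}`,
then `T` has rank `r` and is identifiable: `A` has minimal length among all decompositions
and is the unique decomposition of length at most `r`. -/
theorem stmt5 (n : ℕ) (T : MvPolynomial (Fin 3) ℂ) (hT0 : T ≠ 0)
    (hThom : T.IsHomogeneous (8 + 2 * n))
    (A : Finset (Pt 2)) (hA : IsDecomp (8 + 2 * n) A T)
    (hAnr : NonRedundant (8 + 2 * n) A T)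
    (hr : A.card ≤ 11 + 3 * n)
    (hk2 : kruskalRank 2 A = min 6 A.card)
    (hk3 : min A.card (3 * n + 9) ≤ kruskalRank (n + 3) A) :
    (∀ B : Finset (Pt 2), IsDecomp (8 + 2 * n) B T → A.card ≤ B.card) ∧
      (∀ B : Finset (Pt 2), IsDecomp (8 + 2 * n) B T → B.card ≤ A.card → B = A) :=
  stmt5_general n T A hA hAnr hr hk2 hk3

end
end

section
/- Let A ⊂ ℙ^2 be a finite set contained in a smooth plane cubic curve C (the zero locus of a homogeneous polynomial F of degree 3 whose gradient does not vanish at any point of C). Then for every integer b ≥ 1, the b-th Kruskal rank of A satisfies k_b(A) ≤ 3b. -/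
open MvPolynomial
open scoped Classical

noncomputable section

/-! A linear relation among the evaluation functionals `ev_P` on forms of degree `b` gives the
same relation among the powers `L_P^b`, because `ev_P (L_w^b) = L_P(w)^b` for every `w`. So if the
`L_P^b`, `P ∈ S ⊆ {F = 0}`, are independent, so are the `ev_P`; they all kill the multiples `F·G`
with `deg G = b - 3`, hence `|S| ≤ C(b+2, 2) - C(b-1, 2) = 3b` (for `b ≤ 2`, `C(b+2, 2) ≤ 3b`
directly). -/

namespace MvPolynomial

variable {σ K : Type*}

def degreeEqEquivSym (σ : Type*) (d : ℕ) : {x : σ →₀ ℕ | x.degree = d} ≃ Sym σ d :=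
  (Equiv.subtypeEquivRight fun _ => Iff.rfl).trans (Sym.equivNatSum σ d).symm

def homogeneousBasis (σ K : Type*) [CommRing K] (d : ℕ) :
    Module.Basis (Sym σ d) K (homogeneousSubmodule σ K d) :=
  ((basisRestrictSupport K _).map
    (LinearEquiv.ofEq _ _ (homogeneousSubmodule_eq_finsupp_supported σ K d).symm)).reindex
    (degreeEqEquivSym σ d)

instance [Fintype σ] [CommRing K] (d : ℕ) : Module.Finite K (homogeneousSubmodule σ K d) :=
  Module.Finite.of_basis (homogeneousBasis σ K d)

theorem finrank_homogeneousSubmodule [Fintype σ] [CommRing K] [Nontrivial K] (d : ℕ) :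
    Module.finrank K (homogeneousSubmodule σ K d) = (Fintype.card σ).multichoose d := by
  rw [Module.finrank_eq_card_basis (homogeneousBasis σ K d), Sym.card_sym_eq_multichoose]

theorem finrank_homogeneousSubmodule_fin_three [CommRing K] [Nontrivial K] (d : ℕ) :
    Module.finrank K (homogeneousSubmodule (Fin 3) K d) = (d + 2).choose 2 := by
  rw [finrank_homogeneousSubmodule, Fintype.card_fin, Nat.multichoose_eq,
    show 3 + d - 1 = d + 2 by omega, Nat.choose_symm_add]

def homogeneousEval [CommRing K] (d : ℕ) (v : σ → K) :
    Module.Dual K (homogeneousSubmodule σ K d) :=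
  (aeval v).toLinearMap ∘ₗ (homogeneousSubmodule σ K d).subtype

@[simp]
theorem homogeneousEval_apply [CommRing K] (d : ℕ) (v : σ → K)
    (G : homogeneousSubmodule σ K d) : homogeneousEval d v G = eval v G.1 :=
  rfl

def mulLeftHomogeneous [CommRing K] {F : MvPolynomial σ K} {e : ℕ} (hF : F.IsHomogeneous e)
    (k : ℕ) : homogeneousSubmodule σ K k →ₗ[K] homogeneousSubmodule σ K (e + k) :=
  (LinearMap.mulLeft K F).restrict fun _ hG => hF.mul hG

@[simp]
theorem coe_mulLeftHomogeneous_apply [CommRing K] {F : MvPolynomial σ K} {e : ℕ}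
    (hF : F.IsHomogeneous e) {k : ℕ} (G : homogeneousSubmodule σ K k) :
    (mulLeftHomogeneous hF k G : MvPolynomial σ K) = F * G :=
  rfl

theorem mulLeftHomogeneous_injective [CommRing K] [IsDomain K] {F : MvPolynomial σ K} {e : ℕ}
    (hF : F.IsHomogeneous e) (hF0 : F ≠ 0) (k : ℕ) :
    Function.Injective (mulLeftHomogeneous hF k) := fun _ _ h =>
  Subtype.ext (mul_left_cancel₀ hF0 (congrArg Subtype.val h))

theorem homogeneousEval_mem_dualAnnihilator [CommRing K] {F : MvPolynomial σ K} {e : ℕ}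
    (hF : F.IsHomogeneous e) (k : ℕ) {v : σ → K} (hv : eval v F = 0) :
    homogeneousEval (e + k) v ∈ (LinearMap.range (mulLeftHomogeneous hF k)).dualAnnihilator := by
  rw [Submodule.mem_dualAnnihilator]
  rintro _ ⟨G, rfl⟩
  simp [hv]

theorem finrank_dualAnnihilator_range_mulLeftHomogeneous [Fintype σ] [Field K]
    {F : MvPolynomial σ K} {e : ℕ} (hF : F.IsHomogeneous e) (hF0 : F ≠ 0) (k : ℕ) :
    Module.finrank K (LinearMap.range (mulLeftHomogeneous hF k)).dualAnnihilator +
      Module.finrank K (homogeneousSubmodule σ K k) =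
    Module.finrank K (homogeneousSubmodule σ K (e + k)) := by
  rw [← LinearMap.finrank_range_of_inj (mulLeftHomogeneous_injective hF hF0 k), add_comm,
    Subspace.finrank_add_finrank_dualAnnihilator_eq]

theorem card_add_finrank_le_of_linearIndependent_homogeneousEval [Fintype σ] [Field K]
    {ι : Type*} [Fintype ι] {F : MvPolynomial σ K} {e k : ℕ} (hF : F.IsHomogeneous e)
    (hF0 : F ≠ 0) {v : ι → σ → K} (hv : ∀ i, eval (v i) F = 0)
    (hli : LinearIndependent K fun i => homogeneousEval (e + k) (v i)) :
    Fintype.card ι + Module.finrank K (homogeneousSubmodule σ K k) ≤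
      Module.finrank K (homogeneousSubmodule σ K (e + k)) := by
  set W := (LinearMap.range (mulLeftHomogeneous hF k)).dualAnnihilator
  have hliW : LinearIndependent K fun i =>
      (⟨homogeneousEval (e + k) (v i), homogeneousEval_mem_dualAnnihilator hF k (hv i)⟩ : W) :=
    .of_comp W.subtype hli
  rw [← finrank_dualAnnihilator_range_mulLeftHomogeneous hF hF0 k]
  exact Nat.add_le_add_right hliW.fintype_card_le_finrank _

end MvPolynomial

section Veronese

variable {m : ℕ}

theorem eval_linForm_comm (u v : Fin (m + 1) → ℂ) :
    eval u (linForm v) = eval v (linForm u) := by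
  simp [linForm, mul_comm]

theorem isHomogeneous_linForm_pow (v : Fin (m + 1) → ℂ) (d : ℕ) :
    (linForm v ^ d).IsHomogeneous d := by
  simpa [linForm] using (IsHomogeneous.sum _ _ 1 fun i _ => isHomogeneous_C_mul_X (v i) i).pow d

theorem LinearIndependent.homogeneousEval_of_linForm_pow {ι : Type*} {v : ι → Fin (m + 1) → ℂ}
    {d : ℕ} (h : LinearIndependent ℂ fun i => linForm (v i) ^ d) :
    LinearIndependent ℂ fun i => homogeneousEval d (v i) := by
  let evalFun : MvPolynomial (Fin (m + 1)) ℂ →ₗ[ℂ] (Fin (m + 1) → ℂ) → ℂ :=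
    LinearMap.pi fun w => (aeval w).toLinearMap
  let pairing :
      Module.Dual ℂ (homogeneousSubmodule (Fin (m + 1)) ℂ d) →ₗ[ℂ] (Fin (m + 1) → ℂ) → ℂ :=
    LinearMap.pi fun w => LinearMap.applyₗ ⟨linForm w ^ d, isHomogeneous_linForm_pow w d⟩
  have hker : LinearMap.ker evalFun = ⊥ :=
    LinearMap.ker_eq_bot.mpr fun p q hpq => MvPolynomial.funext fun w => congrFun hpq w
  -- `ev_v (L_w^d) = L_w(v)^d = L_v(w)^d`: pairing with the powers `L_w^d` turns the
  -- functional `ev_v` into the polynomial function of `L_v^d`.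
  have hcomp : pairing ∘ (fun i => homogeneousEval d (v i)) =
      evalFun ∘ fun i => linForm (v i) ^ d := by
    funext i w
    simp [pairing, evalFun, eval_linForm_comm]
  exact .of_comp pairing (hcomp ▸ h.map' evalFun hker)

theorem kruskalRank_le_of_forall_card_le {d r : ℕ} (Z : Finset (Pt m))
    (h : ∀ S ⊆ Z, LinearIndependent ℂ (fun P : S => powRep d P.1) → S.card ≤ r) :
    kruskalRank d Z ≤ r := by
  refine csSup_le' ?_
  rintro k ⟨hkZ, hk⟩
  by_contra! hrk
  obtain ⟨S, hSZ, hS⟩ := Finset.exists_subset_card_eq (show r + 1 ≤ Z.card by omega)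
  have := h S hSZ (hk S hSZ (by omega))
  omega

end Veronese

theorem card_le_three_mul_of_linearIndependent_powRep {F : MvPolynomial (Fin 3) ℂ} (hF0 : F ≠ 0)
    (hF : F.IsHomogeneous 3) {S : Finset (Pt 2)} (hSF : ∀ P ∈ S, eval P.rep F = 0) {b : ℕ}
    (hb : 1 ≤ b) (hS : LinearIndependent ℂ fun P : S => powRep b P.1) : S.card ≤ 3 * b := by
  have hli : LinearIndependent ℂ fun P : S => homogeneousEval b P.1.rep :=
    hS.homogeneousEval_of_linForm_pow
  rcases le_or_gt 3 b with h3 | h3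
  · obtain ⟨k, rfl⟩ := Nat.exists_eq_add_of_le h3
    have hcard := card_add_finrank_le_of_linearIndependent_homogeneousEval hF hF0
      (fun P : S => hSF P.1 P.2) hli
    rw [Fintype.card_coe, finrank_homogeneousSubmodule_fin_three,
      finrank_homogeneousSubmodule_fin_three] at hcard
    have hchoose : (3 + k + 2).choose 2 = (k + 2).choose 2 + 3 * (3 + k) := by
      simp only [show 3 + k + 2 = k + 2 + 1 + 1 + 1 by omega, Nat.choose_succ_succ',
        Nat.choose_zero_right, zero_add, Nat.choose_one_right, Nat.reduceAdd]
      omega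
    omega
  · have hcard := hli.fintype_card_le_finrank
    rw [Fintype.card_coe, Subspace.dual_finrank_eq, finrank_homogeneousSubmodule_fin_three] at hcard
    interval_cases b <;> simpa [Nat.choose] using hcard

theorem stmt15_general (A : Finset (Pt 2)) (F : MvPolynomial (Fin 3) ℂ) (hF0 : F ≠ 0)
    (hFhom : F.IsHomogeneous 3)
    (hAC : ∀ P ∈ A, eval (Projectivization.rep P) F = 0) :
    ∀ b : ℕ, 1 ≤ b → kruskalRank b A ≤ 3 * b := fun _ hb =>
  kruskalRank_le_of_forall_card_le A fun _ hSA hS =>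
    card_le_three_mul_of_linearIndependent_powRep hF0 hFhom (fun P hP => hAC P (hSA hP)) hb hS

/-- If a finite set `A ⊂ ℙ²` is contained in a smooth plane cubic curve
`C = {F = 0}`, then `k_b(A) ≤ 3b` for every `b ≥ 1`. -/
theorem stmt15 (A : Finset (Pt 2)) (F : MvPolynomial (Fin 3) ℂ) (hF0 : F ≠ 0)
    (hFhom : F.IsHomogeneous 3)
    (hsmooth : ∀ v : Fin 3 → ℂ, v ≠ 0 → eval v F = 0 →
      ∃ i : Fin 3, eval v (pderiv i F) ≠ 0)
    (hAC : ∀ P ∈ A, eval (Projectivization.rep P) F = 0) :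
    ∀ b : ℕ, 1 ≤ b → kruskalRank b A ≤ 3 * b :=
  stmt15_general A F hF0 hFhom hAC

end
end
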